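/- For α > 2 and s > 0, ∫₀^∞ (1 - E[e^{-s H ρ r^{-α}}]) r dr = (1/2) s^{2/α} E[ρ^{2/α}] Γ(1 + 2/α) Γ(1 - 2/α), where H is exponential with rate 1 independent of the nonnegative random variable ρ with E[ρ^{2/α}] < ∞. -/

import Mathlib

/-!
Conditioning on the mark `X = s H ρ` and exchanging the two integrals (Tonelli), one has to
compute `∫₀^∞ (1 - e^{-X r^{-α}}) r dr`. The substitution `y = X r^{-α}` turns it into
`(X^{2/α} / α) ∫₀^∞ (1 - e^{-y}) y^{-2/α-1} dy`, and an integration by parts against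
`-y^{-2/α} α / 2` identifies the last integral with `Γ(1 - 2/α) α / 2`. Finally
`E[(s H ρ)^{2/α}] = s^{2/α} E[H^{2/α}] E[ρ^{2/α}]` by independence, and the layer-cake formula
gives `E[H^p] = Γ(1 + p)` for the exponential variable `H`.
-/

open MeasureTheory ProbabilityTheory Real Set Filter Topology

lemma one_sub_exp_neg_nonneg {y : ℝ} (hy : 0 ≤ y) : 0 ≤ 1 - exp (-y) := by
  simpa using hy

lemma one_sub_exp_neg_le_self (y : ℝ) : 1 - exp (-y) ≤ y := by
  linarith [one_sub_le_exp_neg y]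

lemma one_sub_exp_neg_le_one (y : ℝ) : 1 - exp (-y) ≤ 1 := by
  linarith [exp_pos (-y)]

lemma integrableOn_one_sub_exp_neg_mul_rpow {p : ℝ} (hp : 0 < p) (hp1 : p < 1) :
    IntegrableOn (fun y => (1 - exp (-y)) * y ^ (-p - 1)) (Ioi 0) := by
  have hmeas : AEStronglyMeasurable (fun y : ℝ => (1 - exp (-y)) * y ^ (-p - 1)) := by
    fun_prop
  rw [← Ioc_union_Ioi_eq_Ioi zero_le_one]
  refine IntegrableOn.union ?_ ?_
  · have hdom : IntegrableOn (fun y : ℝ => y ^ (-p)) (Ioc 0 1) :=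
      (intervalIntegral.intervalIntegrable_rpow' (by linarith)).1
    refine hdom.integrable.mono' hmeas.restrict ?_
    filter_upwards [ae_restrict_mem measurableSet_Ioc] with y hy
    have hy0 : 0 < y := hy.1
    rw [norm_of_nonneg (mul_nonneg (one_sub_exp_neg_nonneg hy0.le) (by positivity))]
    calc (1 - exp (-y)) * y ^ (-p - 1) ≤ y * y ^ (-p - 1) := by
          gcongr; exact one_sub_exp_neg_le_self y
      _ = y ^ (-p) := by rw [mul_comm, ← rpow_add_one hy0.ne']; ring_nf
  · refine (integrableOn_Ioi_rpow_of_lt (a := -p - 1) (by linarith) one_pos).integrable.mono'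
      hmeas.restrict ?_
    filter_upwards [ae_restrict_mem measurableSet_Ioi] with y (hy : 1 < y)
    have hy0 : 0 < y := one_pos.trans hy
    rw [norm_of_nonneg (mul_nonneg (one_sub_exp_neg_nonneg hy0.le) (by positivity))]
    exact mul_le_of_le_one_left (by positivity) (one_sub_exp_neg_le_one y)

lemma integral_one_sub_exp_neg_mul_rpow {p : ℝ} (hp : 0 < p) (hp1 : p < 1) :
    ∫ y in Ioi 0, (1 - exp (-y)) * y ^ (-p - 1) = Gamma (1 - p) / p := by
  have hu (y : ℝ) : HasDerivAt (fun y => 1 - exp (-y)) (exp (-y)) y := by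
    simpa using ((hasDerivAt_neg y).exp).const_sub 1
  have hv (y : ℝ) (hy : y ∈ Ioi 0) : HasDerivAt (fun y => -y ^ (-p) / p) (y ^ (-p - 1)) y := by
    refine ((hasDerivAt_rpow_const (Or.inl (ne_of_gt hy))).neg.div_const p).congr_deriv ?_
    field_simp
  have hGamma : IntegrableOn (fun y => exp (-y) * y ^ (1 - p - 1)) (Ioi 0) :=
    GammaIntegral_convergent (by linarith)
  have hu'v : ∫ y in Ioi 0, exp (-y) * (-y ^ (-p) / p) = -(Gamma (1 - p) / p) := by
    rw [Gamma_eq_integral (by linarith), ← integral_div, ← integral_neg]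
    refine setIntegral_congr_fun measurableSet_Ioi fun y _ => ?_
    ring_nf
  have h_zero : Tendsto (fun y => (1 - exp (-y)) * (-y ^ (-p) / p)) (𝓝[>] 0) (𝓝 0) := by
    have hdom : Tendsto (fun y : ℝ => y ^ (1 - p) / p) (𝓝[>] 0) (𝓝 0) := by
      have := ((continuousAt_rpow_const 0 (1 - p) (Or.inr (by linarith))).div_const p).tendsto
      rw [zero_rpow (by linarith), zero_div] at this
      exact this.mono_left nhdsWithin_le_nhds
    refine squeeze_zero_norm' ?_ hdom
    filter_upwards [self_mem_nhdsWithin] with y (hy : 0 < y)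
    rw [norm_mul, norm_of_nonneg (one_sub_exp_neg_nonneg hy.le), norm_div, norm_neg,
      norm_of_nonneg (by positivity), norm_of_nonneg hp.le]
    calc (1 - exp (-y)) * (y ^ (-p) / p) ≤ y * (y ^ (-p) / p) := by
          gcongr; exact one_sub_exp_neg_le_self y
      _ = y ^ (1 - p) / p := by rw [rpow_sub hy, rpow_one, rpow_neg hy.le]; field_simp
  have h_infty : Tendsto (fun y => (1 - exp (-y)) * (-y ^ (-p) / p)) atTop (𝓝 0) := by
    simpa using (tendsto_exp_neg_atTop_nhds_zero.const_sub 1).mul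
      ((tendsto_rpow_neg_atTop hp).neg.div_const p)
  have := integral_Ioi_mul_deriv_eq_deriv_mul (fun y _ => hu y) hv
    (integrableOn_one_sub_exp_neg_mul_rpow hp hp1) ?_ h_zero h_infty
  · rw [this, hu'v]; ring
  · refine IntegrableOn.congr_fun (hGamma.neg.div_const p) (fun y _ => ?_) measurableSet_Ioi
    simp only [Pi.mul_apply, Pi.neg_apply]
    ring_nf

/-- The integrand produced by the substitutions `y = r ^ (-α)` and `u = w * y`. -/
lemma rpow_neg_smul_one_sub_exp_neg_mul_rpow {d α w r : ℝ} (hα : 0 < α) (hw : 0 < w)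
    (hr : 0 < r) :
    (|-α| * r ^ (-α - 1)) • (w ^ (d / α + 1) / α *
        ((1 - exp (-(w * r ^ (-α)))) * (w * r ^ (-α)) ^ (-(d / α) - 1)))
      = (1 - exp (-(w * r ^ (-α)))) * r ^ (d - 1) := by
  have hr_pow : (r ^ (-α)) ^ (-(d / α) - 1) = r ^ (d + α) := by
    rw [← rpow_mul hr.le]; congr 1; field_simp; ring
  have hr_mul : r ^ (-α - 1) * r ^ (d + α) = r ^ (d - 1) := by
    rw [← rpow_add hr]; ring_nf
  have hw_pow : w ^ (-(d / α) - 1) = (w ^ (d / α + 1))⁻¹ := by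
    rw [← rpow_neg hw.le]; ring_nf
  rw [smul_eq_mul, abs_neg, abs_of_pos hα, mul_rpow hw.le (by positivity), hr_pow, hw_pow,
    ← hr_mul]
  field_simp

lemma integrableOn_one_sub_exp_neg_mul_rpow_neg {d α w : ℝ} (hd : 0 < d) (hdα : d < α)
    (hw : 0 ≤ w) :
    IntegrableOn (fun r => (1 - exp (-(w * r ^ (-α)))) * r ^ (d - 1)) (Ioi 0) := by
  obtain rfl | hw := hw.eq_or_lt
  · simp
  have hα : 0 < α := hd.trans hdα
  have hq : d / α < 1 := (div_lt_one hα).2 hdα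
  have hint := ((integrableOn_Ioi_comp_mul_left_iff
    (fun u => (1 - exp (-u)) * u ^ (-(d / α) - 1)) 0 hw).2
    (by simpa using integrableOn_one_sub_exp_neg_mul_rpow (by positivity) hq)).const_mul
    (w ^ (d / α + 1) / α)
  refine ((integrableOn_Ioi_comp_rpow_iff _ (neg_ne_zero.2 hα.ne')).2 hint).congr_fun
    (fun r hr => rpow_neg_smul_one_sub_exp_neg_mul_rpow hα hw hr) measurableSet_Ioi

lemma integral_one_sub_exp_neg_mul_rpow_neg {d α w : ℝ} (hd : 0 < d) (hdα : d < α)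
    (hw : 0 ≤ w) :
    ∫ r in Ioi 0, (1 - exp (-(w * r ^ (-α)))) * r ^ (d - 1)
      = w ^ (d / α) * Gamma (1 - d / α) / d := by
  have hα : 0 < α := hd.trans hdα
  obtain rfl | hw := hw.eq_or_lt
  · simp [zero_rpow (div_pos hd hα).ne']
  have hq : d / α < 1 := (div_lt_one hα).2 hdα
  rw [← setIntegral_congr_fun measurableSet_Ioi
      (fun r hr => rpow_neg_smul_one_sub_exp_neg_mul_rpow (d := d) hα hw hr),
    integral_comp_rpow_Ioi (fun y => w ^ (d / α + 1) / α *
      ((1 - exp (-(w * y))) * (w * y) ^ (-(d / α) - 1))) (neg_ne_zero.2 hα.ne'),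
    integral_const_mul,
    integral_comp_mul_left_Ioi (fun u => (1 - exp (-u)) * u ^ (-(d / α) - 1)) 0 hw,
    mul_zero, integral_one_sub_exp_neg_mul_rpow (by positivity) hq, rpow_add_one hw.ne',
    smul_eq_mul]
  field_simp

section Moments

variable {Ω : Type*} [MeasurableSpace Ω] {μ : Measure Ω} {H : Ω → ℝ}

lemma lintegral_rpow_eq_Gamma_of_meas_le_eq_exp (hH0 : 0 ≤ᵐ[μ] H) (hHm : AEMeasurable H μ)
    (hH : ∀ t > 0, μ {ω | t ≤ H ω} = ENNReal.ofReal (exp (-t))) {p : ℝ} (hp : 0 < p) :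
    ∫⁻ ω, ENNReal.ofReal (H ω ^ p) ∂μ = ENNReal.ofReal (Gamma (p + 1)) := by
  rw [lintegral_rpow_eq_lintegral_meas_le_mul μ hH0 hHm hp,
    setLIntegral_congr_fun measurableSet_Ioi
      (fun t ht => by rw [hH t ht, ← ENNReal.ofReal_mul (exp_nonneg _)]),
    ← ofReal_integral_eq_lintegral_ofReal (GammaIntegral_convergent hp),
    ← ENNReal.ofReal_mul hp.le, ← Gamma_eq_integral hp, Gamma_add_one hp.ne']
  filter_upwards [ae_restrict_mem measurableSet_Ioi] with t (ht : 0 < t)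
  positivity

lemma integrable_rpow_of_meas_le_eq_exp (hH0 : 0 ≤ᵐ[μ] H) (hHm : AEMeasurable H μ)
    (hH : ∀ t > 0, μ {ω | t ≤ H ω} = ENNReal.ofReal (exp (-t))) {p : ℝ} (hp : 0 < p) :
    Integrable (fun ω => H ω ^ p) μ := by
  refine ⟨(hHm.pow_const p).aestronglyMeasurable, ?_⟩
  rw [hasFiniteIntegral_iff_ofReal (by filter_upwards [hH0] with ω hω using rpow_nonneg hω p),
    lintegral_rpow_eq_Gamma_of_meas_le_eq_exp hH0 hHm hH hp]
  exact ENNReal.ofReal_lt_top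

lemma integral_rpow_eq_Gamma_of_meas_le_eq_exp (hH0 : 0 ≤ᵐ[μ] H) (hHm : AEMeasurable H μ)
    (hH : ∀ t > 0, μ {ω | t ≤ H ω} = ENNReal.ofReal (exp (-t))) {p : ℝ} (hp : 0 < p) :
    ∫ ω, H ω ^ p ∂μ = Gamma (p + 1) := by
  rw [integral_eq_lintegral_of_nonneg_ae
      (by filter_upwards [hH0] with ω hω using rpow_nonneg hω p)
      (hHm.pow_const p).aestronglyMeasurable,
    lintegral_rpow_eq_Gamma_of_meas_le_eq_exp hH0 hHm hH hp,
    ENNReal.toReal_ofReal (Gamma_nonneg_of_nonneg (by linarith))]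

end Moments

theorem integral_one_sub_integral_exp_neg_mul_rpow_neg {Ω : Type*} [MeasurableSpace Ω]
    {μ : Measure Ω} [IsProbabilityMeasure μ] {d α : ℝ} (hd : 0 < d) (hdα : d < α)
    {X : Ω → ℝ} (hXm : Measurable X) (hX0 : 0 ≤ᵐ[μ] X)
    (hXint : Integrable (fun ω => X ω ^ (d / α)) μ) :
    ∫ r in Ioi 0, (1 - ∫ ω, exp (-(X ω * r ^ (-α))) ∂μ) * r ^ (d - 1)
      = Gamma (1 - d / α) / d * ∫ ω, X ω ^ (d / α) ∂μ := by
  set f : ℝ → Ω → ℝ := fun r ω => (1 - exp (-(X ω * r ^ (-α)))) * r ^ (d - 1) with hf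
  have hf_meas : Measurable (Function.uncurry f) := by
    simp only [hf, Function.uncurry_def]; fun_prop
  have hf_nonneg : ∀ᵐ ω ∂μ, ∀ r ∈ Ioi (0 : ℝ), 0 ≤ f r ω := by
    filter_upwards [hX0] with ω hω r (hr : 0 < r)
    exact mul_nonneg (one_sub_exp_neg_nonneg (mul_nonneg hω (rpow_nonneg hr.le _)))
      (rpow_nonneg hr.le _)
  have hinner (r : ℝ) (hr : r ∈ Ioi 0) :
      ∫ ω, f r ω ∂μ = (1 - ∫ ω, exp (-(X ω * r ^ (-α))) ∂μ) * r ^ (d - 1) := by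
    have hexp : Integrable (fun ω => exp (-(X ω * r ^ (-α)))) μ := by
      refine .of_bound (by fun_prop) 1 ?_
      filter_upwards [hX0] with ω hω
      rw [norm_of_nonneg (exp_nonneg _), exp_le_one_iff, neg_nonpos]
      exact mul_nonneg hω (rpow_nonneg (le_of_lt hr) _)
    rw [integral_mul_const, integral_sub (integrable_const 1) hexp, integral_const]
    simp
  have hradial : ∀ᵐ ω ∂μ, ∫ r in Ioi 0, f r ω = X ω ^ (d / α) * (Gamma (1 - d / α) / d) := by
    filter_upwards [hX0] with ω hω
    rw [integral_one_sub_exp_neg_mul_rpow_neg hd hdα hω, mul_div_assoc]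
  have hprod : Integrable (Function.uncurry f) ((volume.restrict (Ioi 0)).prod μ) := by
    refine (integrable_prod_iff' hf_meas.aestronglyMeasurable).2 ⟨?_, ?_⟩
    · filter_upwards [hX0] with ω hω
      exact integrableOn_one_sub_exp_neg_mul_rpow_neg hd hdα hω
    · refine (hXint.mul_const (Gamma (1 - d / α) / d)).congr ?_
      filter_upwards [hf_nonneg, hradial] with ω hω hω'
      rw [← hω']
      exact setIntegral_congr_fun measurableSet_Ioi fun r hr => (norm_of_nonneg (hω r hr)).symm
  calc ∫ r in Ioi 0, (1 - ∫ ω, exp (-(X ω * r ^ (-α))) ∂μ) * r ^ (d - 1)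
      = ∫ r in Ioi 0, ∫ ω, f r ω ∂μ := (setIntegral_congr_fun measurableSet_Ioi hinner).symm
    _ = ∫ ω, (∫ r in Ioi 0, f r ω) ∂μ := integral_integral_swap hprod
    _ = ∫ ω, X ω ^ (d / α) * (Gamma (1 - d / α) / d) ∂μ := integral_congr_ae hradial
    _ = Gamma (1 - d / α) / d * ∫ ω, X ω ^ (d / α) ∂μ := by rw [integral_mul_const, mul_comm]

/-- For `α > 2` and `s > 0`, with `H` exponential of rate 1 independent of a
nonnegative random variable `ρ` satisfying `E[ρ^(2/α)] < ∞`,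
`∫₀^∞ (1 - E[e^(-s H ρ r^(-α))]) r dr
  = (1/2) s^(2/α) E[ρ^(2/α)] Γ(1 + 2/α) Γ(1 - 2/α)`. -/
theorem interference_radial_integral
    {Ω : Type*} [MeasurableSpace Ω] (μ : Measure Ω) [IsProbabilityMeasure μ]
    (H ρ : Ω → ℝ)
    (hHmeas : Measurable H) (hρmeas : Measurable ρ)
    (hρnonneg : ∀ ω, 0 ≤ ρ ω)
    (hHexp : ∀ t : ℝ, 0 ≤ t → μ {ω | t ≤ H ω} = ENNReal.ofReal (Real.exp (-t)))
    (hindep : IndepFun H ρ μ)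
    (α s : ℝ) (hα : 2 < α) (hs : 0 < s)
    (hmom : Integrable (fun ω => ρ ω ^ (2 / α)) μ) :
    ∫ r in Set.Ioi (0:ℝ),
        (1 - ∫ ω, Real.exp (-(s * H ω * ρ ω * r ^ (-α))) ∂μ) * r
      = (1 / 2) * s ^ (2 / α) * (∫ ω, ρ ω ^ (2 / α) ∂μ)
          * Real.Gamma (1 + 2 / α) * Real.Gamma (1 - 2 / α) := by
  have hq : 0 < 2 / α := by positivity
  have hH0 : 0 ≤ᵐ[μ] H :=
    (mem_ae_iff_prob_eq_one (hHmeas measurableSet_Ici)).2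
      (by simpa using hHexp 0 le_rfl : μ {ω | 0 ≤ H ω} = 1)
  have hHtail : ∀ t > 0, μ {ω | t ≤ H ω} = ENNReal.ofReal (exp (-t)) :=
    fun t ht => hHexp t ht.le
  have hindep_pow : IndepFun (fun ω => H ω ^ (2 / α)) (fun ω => ρ ω ^ (2 / α)) μ :=
    hindep.comp (measurable_id.pow_const _) (measurable_id.pow_const _)
  have hX_pow : (fun ω => (s * H ω * ρ ω) ^ (2 / α))
      =ᵐ[μ] fun ω => s ^ (2 / α) * (H ω ^ (2 / α) * ρ ω ^ (2 / α)) := by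
    filter_upwards [hH0] with ω hω
    rw [mul_rpow (mul_nonneg hs.le hω) (hρnonneg ω), mul_rpow hs.le hω, mul_assoc]
  have hX0 : 0 ≤ᵐ[μ] fun ω => s * H ω * ρ ω := by
    filter_upwards [hH0] with ω hω
    exact mul_nonneg (mul_nonneg hs.le hω) (hρnonneg ω)
  have hXint : Integrable (fun ω => (s * H ω * ρ ω) ^ (2 / α)) μ :=
    ((hindep_pow.integrable_mul (integrable_rpow_of_meas_le_eq_exp hH0
      hHmeas.aemeasurable hHtail hq) hmom).const_mul _).congr hX_pow.symm
  have key := integral_one_sub_integral_exp_neg_mul_rpow_neg two_pos hα (by fun_prop) hX0 hXint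
  norm_num only [rpow_one] at key
  rw [key, integral_congr_ae hX_pow, integral_const_mul,
    hindep_pow.integral_fun_mul_eq_mul_integral (hHmeas.pow_const _).aestronglyMeasurable
      hmom.aestronglyMeasurable,
    integral_rpow_eq_Gamma_of_meas_le_eq_exp hH0 hHmeas.aemeasurable hHtail hq, add_comm]
  ring
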